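/- Let M_i be a maximum-weight (hence maximum-size) b-matching of size at most s_i in a bipartite graph H_i with agent-determined edge weights, and let N_i be any b-matching in H_i with vertex set X_i of matched agents, |X_i| ≤ |Y_i| where Y_i is the agent set matched by M_i. Then there exists an injection f : X_i → Y_i such that for every a_p ∈ X_i, the priority factor satisfies α_p ≤ α_{f(a_p)}. -/

import Mathlib

/-!
Sets of agents covered exactly by some b-matching form a matroid. By a capacitated Hall theorem
a set `I` is matchable iff every `T ⊆ I` has at most `capacity T` agents; submodularity of
`capacity` lets the tight sets witnessing non-matchability be merged, which yields the exchange
axiom. If for some threshold `t` the matching `N` had more agents of weight `≥ t` than the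
maximum-weight `M`, exchanging one of them into the heavy part of `M` and re-augmenting from `M`
would trade a light agent of `M` for a heavy one, contradicting maximality. So the heavy counts
of `M` dominate those of `N` at every threshold, and Hall's theorem turns this into the injection.
-/

/-- A b-matching in the bipartite graph with edge set `E` between agents `A`
and categories `C`: each agent matched at most once, each category `c`
matched at most `b c` times. -/
def IsBMatching {A C : Type*} [DecidableEq A] [DecidableEq C]
    (E M : Finset (A × C)) (b : C → ℕ) : Prop :=
  M ⊆ E ∧ (∀ a : A, (M.filter (fun e => e.1 = a)).card ≤ 1) ∧
    (∀ c : C, (M.filter (fun e => e.2 = c)).card ≤ b c)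

section

open Finset

-- Category `c` is split into `b c` unit-capacity slots, reducing b-matchings to Hall's theorem.
def slots {C : Type*} (b : C → ℕ) (c : C) : Finset (C × ℕ) := {c} ×ˢ range (b c)

lemma mem_slots {C : Type*} {b : C → ℕ} {c : C} {p : C × ℕ} :
    p ∈ slots b c ↔ p.1 = c ∧ p.2 < b c := by
  simp only [slots, mem_product, mem_singleton, mem_range]

variable {A C : Type*} [DecidableEq A] [DecidableEq C] {E M M' : Finset (A × C)} {b : C → ℕ}

namespace IsBMatching

lemma mono (hM : IsBMatching E M b) (h : M' ⊆ M) : IsBMatching E M' b :=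
  ⟨h.trans hM.1, fun a => (card_le_card (filter_subset_filter _ h)).trans (hM.2.1 a),
    fun c => (card_le_card (filter_subset_filter _ h)).trans (hM.2.2 c)⟩

lemma injOn_fst (hM : IsBMatching E M b) : Set.InjOn Prod.fst (M : Set (A × C)) :=
  fun e he e' he' h => card_le_one.1 (hM.2.1 e.1) e (by simp_all) e' (by simp_all)

lemma card_image_fst (hM : IsBMatching E M b) : #(M.image Prod.fst) = #M :=
  card_image_of_injOn hM.injOn_fst

lemma sum_image_fst {β : Type*} [AddCommMonoid β] (hM : IsBMatching E M b) (w : A → β) :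
    ∑ a ∈ M.image Prod.fst, w a = ∑ e ∈ M, w e.1 :=
  sum_image fun _ he _ he' h => hM.injOn_fst he he' h

end IsBMatching

def neighbors (E : Finset (A × C)) (b : C → ℕ) (a : A) : Finset C :=
  {c ∈ E.image Prod.snd | (a, c) ∈ E ∧ 0 < b c}

lemma mem_neighbors {a : A} {c : C} : c ∈ neighbors E b a ↔ (a, c) ∈ E ∧ 0 < b c := by
  simp only [neighbors, mem_filter, mem_image, and_iff_right_iff_imp, and_imp]
  exact fun h _ => ⟨_, h, rfl⟩

def capacity (E : Finset (A × C)) (b : C → ℕ) (T : Finset A) : ℕ :=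
  ∑ c ∈ T.biUnion (neighbors E b), b c

lemma capacity_mono {S T : Finset A} (h : S ⊆ T) : capacity E b S ≤ capacity E b T :=
  sum_le_sum_of_subset (biUnion_subset_biUnion_of_subset_left _ h)

def IsMatchable (E : Finset (A × C)) (b : C → ℕ) (I : Finset A) : Prop :=
  ∃ M, IsBMatching E M b ∧ M.image Prod.fst = I

namespace IsMatchable

variable {I J : Finset A}

lemma mono (hI : IsMatchable E b I) (h : J ⊆ I) : IsMatchable E b J := by
  obtain ⟨M, hM, rfl⟩ := hI
  refine ⟨{e ∈ M | e.1 ∈ J}, hM.mono (filter_subset _ _), ?_⟩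
  rw [← filter_image (p := (· ∈ J)), filter_mem_eq_inter, inter_eq_right.2 h]

lemma card_le_capacity (hI : IsMatchable E b I) : #I ≤ capacity E b I := by
  obtain ⟨M, hM, rfl⟩ := hI
  have hmaps : (M : Set (A × C)).MapsTo Prod.snd ((M.image Prod.fst).biUnion (neighbors E b)) := by
    intro e he
    have hpos : 0 < #{e' ∈ M | e'.2 = e.2} := card_pos.2 ⟨e, by simp_all⟩
    exact mem_biUnion.2 ⟨e.1, mem_image_of_mem _ he,
      mem_neighbors.2 ⟨hM.1 he, hpos.trans_le (hM.2.2 e.2)⟩⟩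
  rw [hM.card_image_fst, card_eq_sum_card_fiberwise hmaps]
  exact sum_le_sum fun c _ => hM.2.2 c

end IsMatchable

lemma card_biUnion_slots (D : Finset C) : #(D.biUnion (slots b)) = ∑ c ∈ D, b c := by
  rw [card_biUnion fun c _ c' _ hne => disjoint_left.2 fun p hp hp' =>
    hne ((mem_slots.1 hp).1.symm.trans (mem_slots.1 hp').1)]
  simp [slots]

lemma isMatchable_of_forall_card_le_capacity {I : Finset A}
    (h : ∀ T ⊆ I, #T ≤ capacity E b T) : IsMatchable E b I := by
  let t : I → Finset (C × ℕ) := fun a => (neighbors E b a).biUnion (slots b)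
  have hall : ∀ s : Finset I, #s ≤ #(s.biUnion t) := by
    intro s
    have hs : s.biUnion t = ((s.map (.subtype _)).biUnion (neighbors E b)).biUnion (slots b) := by
      rw [biUnion_biUnion, map_eq_image, image_biUnion]; rfl
    calc #s = #(s.map (.subtype _)) := (card_map _).symm
      _ ≤ capacity E b (s.map (.subtype _)) := h _ fun a ha => by
        obtain ⟨a', -, rfl⟩ := mem_map.1 ha; exact a'.2
      _ = #(s.biUnion t) := by rw [hs, card_biUnion_slots]; rfl
  obtain ⟨f, hf_inj, hf⟩ := (all_card_le_biUnion_card_iff_exists_injective t).1 hall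
  have hf_slot : ∀ a : I, (a.1, (f a).1) ∈ E ∧ (f a).2 < b (f a).1 := fun a => by
    obtain ⟨c, hc, hfc⟩ := mem_biUnion.1 (hf a)
    obtain ⟨rfl, hlt⟩ := mem_slots.1 hfc
    exact ⟨(mem_neighbors.1 hc).1, hlt⟩
  refine ⟨I.attach.image fun a => (a.1, (f a).1), ⟨?_, fun a => ?_, fun c => ?_⟩, ?_⟩
  · intro e he
    obtain ⟨a, -, rfl⟩ := mem_image.1 he
    exact (hf_slot a).1
  · refine card_le_one.2 fun e he e' he' => ?_
    simp only [mem_filter, mem_image] at he he'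
    obtain ⟨⟨a₁, -, rfl⟩, rfl⟩ := he
    obtain ⟨⟨a₂, -, rfl⟩, h₂⟩ := he'
    rw [Subtype.ext h₂]
  · rw [filter_image]
    refine card_image_le.trans ((card_le_card_of_injOn (fun a => (f a).2) ?_ ?_).trans_eq
      (card_range (b c)))
    · intro a ha
      rw [mem_coe, mem_filter] at ha
      exact mem_range.2 (ha.2 ▸ (hf_slot a).2)
    · intro a₁ h₁ a₂ h₂ h
      simp only [coe_filter, Set.mem_ofPred_eq] at h₁ h₂
      exact hf_inj (Prod.ext (h₁.2.trans h₂.2.symm) h)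
  · rw [image_image]
    exact attach_image_val

lemma capacity_union_add_capacity_inter_le (S T : Finset A) :
    capacity E b (S ∪ T) + capacity E b (S ∩ T) ≤ capacity E b S + capacity E b T := by
  have hinter : (S ∩ T).biUnion (neighbors E b) ⊆
      S.biUnion (neighbors E b) ∩ T.biUnion (neighbors E b) :=
    subset_inter (biUnion_subset_biUnion_of_subset_left _ inter_subset_left)
      (biUnion_subset_biUnion_of_subset_left _ inter_subset_right)
  unfold capacity
  rw [union_biUnion]
  exact (Nat.add_le_add_left (sum_le_sum_of_subset hinter) _).trans_eq sum_union_inter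

lemma capacity_lt_capacity_insert {S : Finset A} {x : A}
    (h : ¬ neighbors E b x ⊆ S.biUnion (neighbors E b)) :
    capacity E b S < capacity E b (insert x S) := by
  obtain ⟨c, hcx, hcS⟩ := not_subset.1 h
  unfold capacity
  rw [biUnion_insert]
  exact sum_lt_sum_of_subset subset_union_right (mem_union_left _ hcx) hcS
    (mem_neighbors.1 hcx).2 fun _ _ _ => Nat.zero_le _

namespace IsMatchable

variable {I J S T : Finset A}

lemma exists_tight_cover_of_not_insert (hI : IsMatchable E b I) {x : A}
    (hx : ¬ IsMatchable E b (insert x I)) :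
    ∃ S ⊆ I, capacity E b S = #S ∧ neighbors E b x ⊆ S.biUnion (neighbors E b) := by
  obtain ⟨T, hTI, hT⟩ : ∃ T ⊆ insert x I, capacity E b T < #T := by
    by_contra! h
    exact hx (isMatchable_of_forall_card_le_capacity h)
  have hxT : x ∈ T := by
    by_contra hxT
    exact hT.not_ge (hI.mono ((subset_insert_iff_of_notMem hxT).1 hTI)).card_le_capacity
  have hSI : T.erase x ⊆ I := (erase_subset_erase x hTI).trans (erase_insert_subset x I)
  have hS := (hI.mono hSI).card_le_capacity
  have hST := capacity_mono (E := E) (b := b) (subset_insert x (T.erase x))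
  rw [← insert_erase hxT, card_insert_of_notMem (notMem_erase x T)] at hT
  refine ⟨T.erase x, hSI, by omega, ?_⟩
  by_contra hcov
  have := capacity_lt_capacity_insert hcov
  omega

lemma capacity_union_eq_card (hI : IsMatchable E b I) (hSI : S ⊆ I) (hTI : T ⊆ I)
    (hS : capacity E b S = #S) (hT : capacity E b T = #T) :
    capacity E b (S ∪ T) = #(S ∪ T) := by
  have hunion := (hI.mono (union_subset hSI hTI)).card_le_capacity
  have hinter := (hI.mono (inter_subset_left.trans hSI : S ∩ T ⊆ I)).card_le_capacity
  have := capacity_union_add_capacity_inter_le (E := E) (b := b) S T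
  have := card_union_add_card_inter S T
  omega

lemma exists_tight_cover (hI : IsMatchable E b I) {D : Finset A}
    (hD : ∀ x ∈ D, ¬ IsMatchable E b (insert x I)) :
    ∃ S ⊆ I, capacity E b S = #S ∧
      ∀ x ∈ D, neighbors E b x ⊆ S.biUnion (neighbors E b) := by
  induction D using Finset.induction_on with
  | empty => exact ⟨∅, empty_subset _, by simp [capacity], by simp⟩
  | insert x D _ ih =>
    obtain ⟨S, hSI, hS, hScov⟩ := ih fun y hy => hD y (mem_insert_of_mem hy)
    obtain ⟨T, hTI, hT, hTcov⟩ :=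
      hI.exists_tight_cover_of_not_insert (hD x (mem_insert_self x D))
    refine ⟨S ∪ T, union_subset hSI hTI, hI.capacity_union_eq_card hSI hTI hS hT, ?_⟩
    rintro y hy
    rcases mem_insert.1 hy with rfl | hy
    · exact hTcov.trans (biUnion_subset_biUnion_of_subset_left _ subset_union_right)
    · exact (hScov y hy).trans (biUnion_subset_biUnion_of_subset_left _ subset_union_left)

lemma exists_insert_of_card_lt (hI : IsMatchable E b I) (hJ : IsMatchable E b J)
    (hIJ : #I < #J) : ∃ x ∈ J, x ∉ I ∧ IsMatchable E b (insert x I) := by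
  by_contra! h
  obtain ⟨S, hSI, hS, hcov⟩ :=
    hI.exists_tight_cover (D := J \ I) fun x hx => h x (mem_sdiff.1 hx).1 (mem_sdiff.1 hx).2
  -- `T` is matchable, yet its neighbourhood lies in that of the tight set `S`, which is too small
  set T := J \ I ∪ S ∩ J
  have hTS : capacity E b T ≤ capacity E b S := by
    refine sum_le_sum_of_subset ?_
    rw [union_biUnion]
    exact union_subset (biUnion_subset.2 hcov)
      (biUnion_subset_biUnion_of_subset_left _ inter_subset_left)
  have hT : #T ≤ capacity E b T :=
    (hJ.mono (union_subset sdiff_subset inter_subset_right)).card_le_capacity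
  have hTcard : #T = #(J \ I) + #(S ∩ J) :=
    card_union_of_disjoint <| disjoint_left.2 fun a ha haS =>
      (mem_sdiff.1 ha).2 (hSI (mem_inter.1 haS).1)
  have := card_sdiff_add_card_inter S J
  have := card_sdiff_add_card_inter I J
  have := card_sdiff_add_card_inter J I
  have := card_le_card (sdiff_subset_sdiff hSI (subset_refl J))
  have : #(J ∩ I) = #(I ∩ J) := by rw [inter_comm]
  omega

lemma exists_superset_card_eq (hI : IsMatchable E b I) (hJ : IsMatchable E b J)
    (hIJ : #I ≤ #J) : ∃ K, IsMatchable E b K ∧ I ⊆ K ∧ K ⊆ I ∪ J ∧ #K = #J := by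
  obtain ⟨n, hn⟩ : ∃ n, #J - #I = n := ⟨_, rfl⟩
  induction n generalizing I with
  | zero => exact ⟨I, hI, subset_rfl, subset_union_left, by omega⟩
  | succ n ih =>
    obtain ⟨x, hxJ, hxI, hx⟩ := hI.exists_insert_of_card_lt hJ (by omega)
    have hcard := card_insert_of_notMem hxI
    obtain ⟨K, hK, hxIK, hKJ, hKcard⟩ := ih hx (by omega) (by omega)
    refine ⟨K, hK, (subset_insert x I).trans hxIK, hKJ.trans ?_, hKcard⟩
    rw [insert_union]
    exact insert_subset (mem_union_right _ hxJ) subset_rfl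

end IsMatchable

lemma sum_lt_sum_of_sdiff_eq_singleton {β : Type*} [AddCommMonoid β] [PartialOrder β]
    [IsOrderedCancelAddMonoid β] {w : A → β} {K Y : Finset A} {x : A}
    (hK : K \ Y = {x}) (hcard : #K = #Y) (hw : ∀ y ∈ Y \ K, w y < w x) :
    ∑ a ∈ Y, w a < ∑ a ∈ K, w a := by
  obtain ⟨y, hy⟩ : ∃ y, Y \ K = {y} :=
    card_eq_one.1 ((card_sdiff_comm hcard.symm).trans (by rw [hK, card_singleton]))
  rw [← sum_inter_add_sum_sdiff Y K, ← sum_inter_add_sum_sdiff K Y, hK, hy, inter_comm,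
    sum_singleton, sum_singleton]
  exact add_lt_add_right (hw y (hy ▸ mem_singleton_self y)) _

def IsMaxWeightBMatching {β : Type*} [AddCommMonoid β] [LE β] (E : Finset (A × C))
    (b : C → ℕ) (s : ℕ) (w : A → β) (M : Finset (A × C)) : Prop :=
  IsBMatching E M b ∧ #M ≤ s ∧
    ∀ M', IsBMatching E M' b → #M' ≤ s → ∑ e ∈ M', w e.1 ≤ ∑ e ∈ M, w e.1

/-- If for some threshold `t` more agents of `N` than of `M` had weight `≥ t`, one of them could
be exchanged into `M` for an agent of weight `< t`. -/
lemma IsMaxWeightBMatching.card_filter_le_card_filter {β : Type*} [AddCommMonoid β]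
    [LinearOrder β] [IsOrderedCancelAddMonoid β] {N : Finset (A × C)} {s : ℕ} {w : A → β}
    (hM : IsMaxWeightBMatching E b s w M) (hN : IsBMatching E N b)
    (hXY : #(N.image Prod.fst) ≤ #(M.image Prod.fst)) (t : β) :
    #{p ∈ N.image Prod.fst | t ≤ w p} ≤ #{p ∈ M.image Prod.fst | t ≤ w p} := by
  obtain ⟨hM, hMs, hmax⟩ := hM
  set X := N.image Prod.fst
  set Y := M.image Prod.fst
  have hY : IsMatchable E b Y := ⟨M, hM, rfl⟩
  have hX : IsMatchable E b X := ⟨N, hN, rfl⟩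
  by_contra! hlt
  obtain ⟨x, hxX, hxY, hx⟩ :=
    (hY.mono (filter_subset _ Y)).exists_insert_of_card_lt (hX.mono (filter_subset _ X)) hlt
  rw [mem_filter] at hxX
  have hxY' : x ∉ Y := fun h => hxY (mem_filter.2 ⟨h, hxX.2⟩)
  have hxcard : #(insert x {p ∈ Y | t ≤ w p}) ≤ #Y := by
    rw [card_insert_of_notMem hxY]
    exact hlt.trans_le ((card_filter_le X _).trans hXY)
  obtain ⟨K, ⟨M', hM', hM'K⟩, hxK, hKY, hKcard⟩ := hx.exists_superset_card_eq hY hxcard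
  have hsdiff : K \ Y = {x} := by
    refine eq_singleton_iff_unique_mem.2 ⟨mem_sdiff.2 ⟨hxK (mem_insert_self x _), hxY'⟩, ?_⟩
    intro a ha
    rcases mem_union.1 (hKY (mem_sdiff.1 ha).1) with ha' | ha'
    · exact (mem_insert.1 ha').resolve_right fun h => (mem_sdiff.1 ha).2 (mem_filter.1 h).1
    · exact absurd ha' (mem_sdiff.1 ha).2
  have hlow : ∀ y ∈ Y \ K, w y < w x := by
    intro y hy
    rw [mem_sdiff] at hy
    have : ¬ t ≤ w y := fun h => hy.2 (hxK (mem_insert_of_mem (mem_filter.2 ⟨hy.1, h⟩)))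
    exact (not_le.1 this).trans_le hxX.2
  have hM's : #M' ≤ s := by rwa [← hM'.card_image_fst, hM'K, hKcard, hM.card_image_fst]
  have hheavier := sum_lt_sum_of_sdiff_eq_singleton hsdiff hKcard hlow
  rw [← hM'K, hM'.sum_image_fst, hM.sum_image_fst] at hheavier
  exact hheavier.not_ge (hmax M' hM' hM's)

lemma exists_injOn_le_of_card_filter_le {ι β : Type*} [DecidableEq ι] [LinearOrder β]
    (g : ι → β) {X Y : Finset ι}
    (h : ∀ t, #{p ∈ X | t ≤ g p} ≤ #{p ∈ Y | t ≤ g p}) :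
    ∃ f : ι → ι, Set.InjOn f X ∧ ∀ p ∈ X, f p ∈ Y ∧ g p ≤ g (f p) := by
  let t : X → Finset ι := fun p => {q ∈ Y | g p ≤ g q}
  have hall : ∀ s : Finset X, #s ≤ #(s.biUnion t) := by
    intro s
    rcases s.eq_empty_or_nonempty with rfl | hs
    · simp
    -- the member of `s` of least value has enough candidates on its own
    obtain ⟨p, hp, hmin⟩ := s.exists_min_image (fun p => g p.1) hs
    calc #s = #(s.map (.subtype _)) := (card_map _).symm
      _ ≤ #{q ∈ X | g p ≤ g q} := card_le_card fun q hq => by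
        obtain ⟨q', hq', rfl⟩ := mem_map.1 hq
        exact mem_filter.2 ⟨q'.2, hmin q' hq'⟩
      _ ≤ #(t p) := h _
      _ ≤ #(s.biUnion t) := card_le_card (subset_biUnion_of_mem t hp)
  obtain ⟨f, hf_inj, hf⟩ := (all_card_le_biUnion_card_iff_exists_injective t).1 hall
  refine ⟨fun p => if hp : p ∈ X then f ⟨p, hp⟩ else p, fun p hp q hq hpq => ?_,
    fun p hp => ?_⟩
  · rw [mem_coe] at hp hq
    simp only [dif_pos hp, dif_pos hq] at hpq
    exact congrArg Subtype.val (hf_inj hpq)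
  · simpa only [dif_pos hp] using mem_filter.1 (hf ⟨p, hp⟩)

end

theorem exists_priority_injection_general {A C : Type*} [DecidableEq A] [DecidableEq C]
    (E M N : Finset (A × C)) (b : C → ℕ) (s : ℕ) (α : A → ℝ) (δ : ℝ) (i : ℕ)
    (hδ0 : 0 < δ)
    (hM : IsBMatching E M b) (hMs : M.card ≤ s)
    (hmaxW : ∀ M', IsBMatching E M' b → M'.card ≤ s →
      (∑ e ∈ M', α e.1 * δ ^ (i - 1)) ≤ ∑ e ∈ M, α e.1 * δ ^ (i - 1))
    (hN : IsBMatching E N b)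
    (hXY : (N.image Prod.fst).card ≤ (M.image Prod.fst).card) :
    ∃ f : A → A, Set.InjOn f ↑(N.image Prod.fst) ∧
      ∀ p ∈ N.image Prod.fst, f p ∈ M.image Prod.fst ∧ α p ≤ α (f p) := by
  have hmax : IsMaxWeightBMatching E b s (fun a => α a * δ ^ (i - 1)) M := ⟨hM, hMs, hmaxW⟩
  obtain ⟨f, hf_inj, hf⟩ :=
    exists_injOn_le_of_card_filter_le _ (hmax.card_filter_le_card_filter hN hXY)
  exact ⟨f, hf_inj, fun p hp =>
    ⟨(hf p hp).1, le_of_mul_le_mul_right (hf p hp).2 (pow_pos hδ0 _)⟩⟩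

/-- Day `d_i` of the online algorithm: edge weights are agent-determined,
`w (a, c) = α a · δ^(i-1)` with `α a > 0` and `δ ∈ (0,1)`.  Let `M` be a
maximum-weight b-matching of size at most `s` in `H_i` and `N` any
b-matching in `H_i`, with `X`, `Y` the agent sets matched by `N`, `M`
respectively and `|X| ≤ |Y|`.  Then there is an injection `f : X → Y` with
`α p ≤ α (f p)` for all `p ∈ X`. -/
theorem exists_priority_injection {A C : Type*} [DecidableEq A] [DecidableEq C]
    (E M N : Finset (A × C)) (b : C → ℕ) (s : ℕ) (α : A → ℝ) (δ : ℝ) (i : ℕ)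
    (hα : ∀ a, 0 < α a) (hδ0 : 0 < δ) (hδ1 : δ < 1)
    (hM : IsBMatching E M b) (hMs : M.card ≤ s)
    (hmaxW : ∀ M', IsBMatching E M' b → M'.card ≤ s →
      (∑ e ∈ M', α e.1 * δ ^ (i - 1)) ≤ ∑ e ∈ M, α e.1 * δ ^ (i - 1))
    (hN : IsBMatching E N b)
    (hXY : (N.image Prod.fst).card ≤ (M.image Prod.fst).card) :
    ∃ f : A → A, Set.InjOn f ↑(N.image Prod.fst) ∧
      ∀ p ∈ N.image Prod.fst, f p ∈ M.image Prod.fst ∧ α p ≤ α (f p) :=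
  exists_priority_injection_general E M N b s α δ i hδ0 hM hMs hmaxW hN hXY
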